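/- Let w ∈ W have all of its coordinates in {0,1}, and let ℓ* := min{ℓ ∈ {1,...,L+1} : w(ℓ) = 1} (well defined since w(L+1) = 1). Define δ ∈ ℝ^{L+1} by δ(ℓ) := ρ(ℓ*) for ℓ ∈ {1,...,ℓ*} and δ(ℓ) := r̄ for ℓ ∈ {ℓ*+1,...,L+1}. Then δ ∈ Δ, J(w,δ) = ρ(ℓ*), and J(w,δ) ≤ J(w,δ') for every δ' ∈ Δ; that is, δ is an optimal solution of the problem of minimizing J(w,·) over Δ. -/

import Mathlib

open Finset

/-- The maximum revenue `r̄` among the positions `1, …, L+1`. -/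
noncomputable def rbar (L : ℕ) (ρ : ℕ → ℝ) : ℝ :=
  (Finset.Icc 1 (L + 1)).sup' (Finset.nonempty_Icc.mpr (by omega)) ρ

/-- Membership in `Δ = {δ ∈ ℝ^{L+1} : 0 ≤ δ 1 ≤ ⋯ ≤ δ (L+1) ≤ r̄}`. -/
def memDelta (L : ℕ) (ρ δ : ℕ → ℝ) : Prop :=
  0 ≤ δ 1 ∧ (∀ ℓ, 1 ≤ ℓ → ℓ ≤ L → δ ℓ ≤ δ (ℓ + 1)) ∧ δ (L + 1) ≤ rbar L ρ

/-- Membership in `W = {w ∈ ℝ^{N+1} : 0 ≤ w ℓ ≤ 1 for all ℓ, w (L+1) = 1}`. -/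
def memW (N L : ℕ) (w : ℕ → ℝ) : Prop :=
  (∀ ℓ, 1 ≤ ℓ → ℓ ≤ N + 1 → 0 ≤ w ℓ ∧ w ℓ ≤ 1) ∧ w (L + 1) = 1

/-- The objective `J(w, δ)`. -/
noncomputable def Jfun (L : ℕ) (ρ w δ : ℕ → ℝ) : ℝ :=
  δ (L + 1) + ∑ ℓ ∈ Finset.Icc 1 L, (max 0 (ρ ℓ - δ ℓ) - (δ (ℓ + 1) - δ ℓ)) * w ℓ

/-!
When `w` is `0/1`-valued with first `1` at position `ℓ*`, only the summands of `J(w, ·)` with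
index `≥ ℓ*` survive. For any monotone `δ'`, the summand at `ℓ*` is at least
`max 0 (ρ ℓ* - δ' ℓ*) - (δ' (ℓ* + 1) - δ' ℓ*)` and each later one at least `-(δ' (ℓ + 1) - δ' ℓ)`,
so the increments telescope and `J(w, δ') ≥ max 0 (ρ ℓ* - δ' ℓ*) + δ' ℓ* ≥ ρ ℓ*`. The step
function `δ` attains this bound: its only increment sits right after `ℓ*`, and beyond `ℓ*` the
value `r̄` kills every `max 0 (ρ ℓ - r̄)`. If `ℓ* = L + 1` no summand survives, and
`J(w, δ') = δ' (L + 1) ≥ δ' 1 ≥ 0 = ρ (L + 1)`.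
-/

noncomputable def Jterm (ρ w δ : ℕ → ℝ) (ℓ : ℕ) : ℝ :=
  (max 0 (ρ ℓ - δ ℓ) - (δ (ℓ + 1) - δ ℓ)) * w ℓ

section

variable {L k ℓ : ℕ} {ρ w δ : ℕ → ℝ}

lemma Jfun_eq_add_sum_Jterm :
    Jfun L ρ w δ = δ (L + 1) + ∑ ℓ ∈ Icc 1 L, Jterm ρ w δ ℓ :=
  rfl

lemma Jterm_of_eq_zero (h : w ℓ = 0) : Jterm ρ w δ ℓ = 0 := by
  simp [Jterm, h]

lemma Jterm_of_eq_one (h : w ℓ = 1) :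
    Jterm ρ w δ ℓ = max 0 (ρ ℓ - δ ℓ) - (δ (ℓ + 1) - δ ℓ) := by
  simp [Jterm, h]

lemma neg_sub_le_Jterm (hδ : δ ℓ ≤ δ (ℓ + 1)) (hw0 : 0 ≤ w ℓ) (hw1 : w ℓ ≤ 1) :
    -(δ (ℓ + 1) - δ ℓ) ≤ Jterm ρ w δ ℓ := by
  unfold Jterm
  nlinarith [le_max_left 0 (ρ ℓ - δ ℓ)]

lemma Jfun_eq_add_sum_Icc (hk : 1 ≤ k) (h0 : ∀ ℓ, 1 ≤ ℓ → ℓ < k → w ℓ = 0) :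
    Jfun L ρ w δ = δ (L + 1) + ∑ ℓ ∈ Icc k L, Jterm ρ w δ ℓ := by
  rw [Jfun_eq_add_sum_Jterm]
  congr 1
  refine (sum_subset (Icc_subset_Icc_left hk) fun ℓ hℓ hℓk => Jterm_of_eq_zero ?_).symm
  simp only [mem_Icc, not_and, not_le] at hℓ hℓk
  exact h0 ℓ hℓ.1 (by omega)

lemma le_rbar (ρ : ℕ → ℝ) (h1 : 1 ≤ ℓ) (h2 : ℓ ≤ L + 1) : ρ ℓ ≤ rbar L ρ :=
  le_sup' ρ (mem_Icc.mpr ⟨h1, h2⟩)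

lemma memDelta.nonneg_top (hδ : memDelta L ρ δ) : 0 ≤ δ (L + 1) := by
  obtain ⟨h0, hmono, -⟩ := hδ
  suffices ∀ n ≤ L, 0 ≤ δ (n + 1) from this L le_rfl
  intro n hn
  induction n with
  | zero => exact h0
  | succ n ih => exact (ih (by omega)).trans (hmono (n + 1) (by omega) hn)

lemma memDelta_of_step {c : ℝ} (hk1 : 1 ≤ k) (hc0 : 0 ≤ c) (hc : c ≤ rbar L ρ)
    (hδ1 : ∀ ℓ, 1 ≤ ℓ → ℓ ≤ k → δ ℓ = c) (hδ2 : ∀ ℓ, k + 1 ≤ ℓ → ℓ ≤ L + 1 → δ ℓ = rbar L ρ) :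
    memDelta L ρ δ := by
  have hδ : ∀ ℓ, 1 ≤ ℓ → ℓ ≤ L + 1 → δ ℓ = if ℓ ≤ k then c else rbar L ρ := by
    intro ℓ h1 h2
    split_ifs with h
    exacts [hδ1 ℓ h1 h, hδ2 ℓ (by omega) h2]
  refine ⟨by rwa [hδ 1 le_rfl (by omega), if_pos hk1], fun ℓ h1 h2 => ?_, ?_⟩
  · rw [hδ ℓ h1 (by omega), hδ (ℓ + 1) (by omega) (by omega)]
    split_ifs <;> first | rfl | exact hc | omega
  · rw [hδ (L + 1) (by omega) le_rfl]
    split_ifs <;> first | rfl | exact hc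

lemma Jfun_eq_of_forall_eq_zero (h0 : ∀ ℓ, 1 ≤ ℓ → ℓ ≤ L → w ℓ = 0) :
    Jfun L ρ w δ = δ (L + 1) := by
  rw [Jfun_eq_add_sum_Icc (k := L + 1) (by omega) fun ℓ h1 h2 => h0 ℓ h1 (by omega),
    Icc_eq_empty (by omega), sum_empty, add_zero]

lemma le_Jfun_of_eq_one (hk1 : 1 ≤ k) (hkL : k ≤ L) (hwk : w k = 1)
    (h0 : ∀ ℓ, 1 ≤ ℓ → ℓ < k → w ℓ = 0) (hw : ∀ ℓ, k < ℓ → ℓ ≤ L → 0 ≤ w ℓ ∧ w ℓ ≤ 1)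
    (hmono : ∀ ℓ, k ≤ ℓ → ℓ ≤ L → δ ℓ ≤ δ (ℓ + 1)) :
    ρ k ≤ Jfun L ρ w δ := by
  have hlater : -∑ ℓ ∈ Ioc k L, (δ (ℓ + 1) - δ ℓ) ≤ ∑ ℓ ∈ Ioc k L, Jterm ρ w δ ℓ := by
    rw [← sum_neg_distrib]
    refine sum_le_sum fun ℓ hℓ => ?_
    rw [mem_Ioc] at hℓ
    exact neg_sub_le_Jterm (hmono ℓ hℓ.1.le hℓ.2) (hw ℓ hℓ.1 hℓ.2).1 (hw ℓ hℓ.1 hℓ.2).2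
  have htel := sum_Icc_sub hkL δ
  rw [← add_sum_Ioc_eq_sum_Icc hkL] at htel
  rw [Jfun_eq_add_sum_Icc hk1 h0, ← add_sum_Ioc_eq_sum_Icc hkL, Jterm_of_eq_one hwk]
  linarith [le_max_right 0 (ρ k - δ k)]

lemma Jfun_eq_of_eq_one {r : ℝ} (hk1 : 1 ≤ k) (hkL : k ≤ L) (hwk : w k = 1)
    (h0 : ∀ ℓ, 1 ≤ ℓ → ℓ < k → w ℓ = 0) (hδk : δ k = ρ k)
    (hδ : ∀ ℓ, k + 1 ≤ ℓ → ℓ ≤ L + 1 → δ ℓ = r) (hρ : ∀ ℓ, k < ℓ → ℓ ≤ L → ρ ℓ ≤ r) :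
    Jfun L ρ w δ = ρ k := by
  have hlater : ∑ ℓ ∈ Ioc k L, Jterm ρ w δ ℓ = 0 := by
    refine sum_eq_zero fun ℓ hℓ => ?_
    rw [mem_Ioc] at hℓ
    rw [Jterm, hδ ℓ hℓ.1 (by omega), hδ (ℓ + 1) (by omega) (by omega),
      max_eq_left (sub_nonpos.mpr (hρ ℓ hℓ.1 hℓ.2))]
    ring
  rw [Jfun_eq_add_sum_Icc hk1 h0, ← add_sum_Ioc_eq_sum_Icc hkL, hlater, Jterm_of_eq_one hwk,
    hδk, hδ (k + 1) le_rfl (by omega), hδ (L + 1) (by omega) le_rfl, sub_self, max_self]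
  ring

end

theorem stmt8_general
    (N L : ℕ) (hLN : L ≤ N)
    (ρ : ℕ → ℝ)
    (hρpos : ∀ ℓ, 1 ≤ ℓ → ℓ ≤ N + 1 → ℓ ≠ L + 1 → 0 < ρ ℓ)
    (hρ0 : ρ (L + 1) = 0)
    (w : ℕ → ℝ)
    (hbin : ∀ ℓ, 1 ≤ ℓ → ℓ ≤ N + 1 → w ℓ = 0 ∨ w ℓ = 1)
    (lstar : ℕ) (hl1 : 1 ≤ lstar) (hl2 : lstar ≤ L + 1) (hl3 : w lstar = 1)
    (hlmin : ∀ ℓ, 1 ≤ ℓ → ℓ < lstar → w ℓ ≠ 1)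
    (δ : ℕ → ℝ)
    (hδ1 : ∀ ℓ, 1 ≤ ℓ → ℓ ≤ lstar → δ ℓ = ρ lstar)
    (hδ2 : ∀ ℓ, lstar + 1 ≤ ℓ → ℓ ≤ L + 1 → δ ℓ = rbar L ρ) :
    memDelta L ρ δ ∧ Jfun L ρ w δ = ρ lstar ∧
      ∀ δ', memDelta L ρ δ' → Jfun L ρ w δ ≤ Jfun L ρ w δ' := by
  have hw0 : ∀ ℓ, 1 ≤ ℓ → ℓ < lstar → w ℓ = 0 := fun ℓ h1 h2 =>
    (hbin ℓ h1 (by omega)).resolve_right (hlmin ℓ h1 h2)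
  have hwI : ∀ ℓ, lstar < ℓ → ℓ ≤ L → 0 ≤ w ℓ ∧ w ℓ ≤ 1 := fun ℓ h1 h2 => by
    rcases hbin ℓ (by omega) (by omega) with h | h <;> simp [h]
  rcases hl2.lt_or_eq with hlL | rfl
  · have hmem := memDelta_of_step hl1 (hρpos lstar hl1 (by omega) hlL.ne).le
      (le_rbar ρ hl1 hl2) hδ1 hδ2
    have hJ : Jfun L ρ w δ = ρ lstar := Jfun_eq_of_eq_one hl1 (by omega) hl3 hw0
      (hδ1 lstar hl1 le_rfl) hδ2 fun ℓ h1 h2 => le_rbar ρ (by omega) (by omega)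
    exact ⟨hmem, hJ, fun δ' hδ' => hJ ▸ le_Jfun_of_eq_one hl1 (by omega) hl3 hw0 hwI
      fun ℓ h1 h2 => hδ'.2.1 ℓ (by omega) h2⟩
  · have hmem := memDelta_of_step hl1 hρ0.ge (le_rbar ρ hl1 hl2) hδ1 hδ2
    have hJ : Jfun L ρ w δ = ρ (L + 1) := by
      rw [Jfun_eq_of_forall_eq_zero fun ℓ h1 h2 => hw0 ℓ h1 (by omega), hδ1 _ hl1 le_rfl]
    refine ⟨hmem, hJ, fun δ' hδ' => ?_⟩
    rw [hJ, hρ0, Jfun_eq_of_forall_eq_zero fun ℓ h1 h2 => hw0 ℓ h1 (by omega)]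
    exact hδ'.nonneg_top

theorem stmt8
    (N L : ℕ) (hL1 : 1 ≤ L) (hLN : L ≤ N)
    (ρ : ℕ → ℝ)
    (hρpos : ∀ ℓ, 1 ≤ ℓ → ℓ ≤ N + 1 → ℓ ≠ L + 1 → 0 < ρ ℓ)
    (hρ0 : ρ (L + 1) = 0)
    (w : ℕ → ℝ) (hw : memW N L w)
    (hbin : ∀ ℓ, 1 ≤ ℓ → ℓ ≤ N + 1 → w ℓ = 0 ∨ w ℓ = 1)
    (lstar : ℕ) (hl1 : 1 ≤ lstar) (hl2 : lstar ≤ L + 1) (hl3 : w lstar = 1)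
    (hlmin : ∀ ℓ, 1 ≤ ℓ → ℓ < lstar → w ℓ ≠ 1)
    (δ : ℕ → ℝ)
    (hδ1 : ∀ ℓ, 1 ≤ ℓ → ℓ ≤ lstar → δ ℓ = ρ lstar)
    (hδ2 : ∀ ℓ, lstar + 1 ≤ ℓ → ℓ ≤ L + 1 → δ ℓ = rbar L ρ) :
    memDelta L ρ δ ∧ Jfun L ρ w δ = ρ lstar ∧
      ∀ δ', memDelta L ρ δ' → Jfun L ρ w δ ≤ Jfun L ρ w δ' :=
  stmt8_general N L hLN ρ hρpos hρ0 w hbin lstar hl1 hl2 hl3 hlmin δ hδ1 hδ2
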